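/- Let ε_1,…,ε_N be random variables such that AOA(N) holds: for every (h_1,…,h_N) ∈ ℝ^N, Σ_{i=1}^N h_i(ε_i − b_i) ≥ 0 a.s. implies h = 0. Then there exists α_N ∈ (0,1) such that for every (h_1,…,h_N) ∈ ℝ^N with Σ_{i=1}^N h_i² = 1, one has P(Σ_{i=1}^N h_i(ε_i − b_i) < −α_N) > α_N. -/

import Mathlib

open MeasureTheory ProbabilityTheory Filter Finset

/-!
Put `X_h = Σ h_i (ε_i - b_i)` and `φ(h) = E[min 1 (X_h)⁻]`. By dominated convergence `φ` is
continuous, and by AOA it is positive on the unit sphere (`φ(h) = 0` would force `X_h ≥ 0` a.s.),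
so by compactness `φ ≥ m > 0` there. With `α = min m 1 / 3`, the pointwise bound
`min 1 y⁻ ≤ 𝟙{y < -α} + α` gives `P(X_h < -α) ≥ φ(h) - α ≥ 2α`.
-/

noncomputable def truncNegPart (y : ℝ) : ℝ := min 1 y⁻

lemma truncNegPart_nonneg (y : ℝ) : 0 ≤ truncNegPart y :=
  le_min zero_le_one (negPart_nonneg y)

lemma truncNegPart_le_one (y : ℝ) : truncNegPart y ≤ 1 :=
  min_le_left _ _

lemma abs_truncNegPart_le_one (y : ℝ) : |truncNegPart y| ≤ 1 := by
  rw [abs_of_nonneg (truncNegPart_nonneg y)]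
  exact truncNegPart_le_one y

lemma truncNegPart_eq_zero_iff {y : ℝ} : truncNegPart y = 0 ↔ 0 ≤ y := by
  simp +contextual [truncNegPart, min_eq_iff, negPart_eq_zero]

lemma continuous_truncNegPart : Continuous truncNegPart :=
  continuous_const.min continuous_negPart

lemma truncNegPart_le_indicator_add {α : ℝ} (hα : 0 ≤ α) (y : ℝ) :
    truncNegPart y ≤ (Set.Iio (-α)).indicator 1 y + α := by
  by_cases hy : y < -α
  · rw [Set.indicator_of_mem (Set.mem_Iio.2 hy), Pi.one_apply]
    linarith [truncNegPart_le_one y]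
  · rw [Set.indicator_of_notMem (by simpa using hy), zero_add]
    exact (min_le_right _ _).trans (max_le (by linarith) hα)

section Integral

variable {Ω : Type*} [MeasurableSpace Ω] {P : Measure Ω}

lemma integral_truncNegPart_le [IsProbabilityMeasure P] {Y : Ω → ℝ} (hY : Measurable Y)
    {α : ℝ} (hα : 0 ≤ α) :
    ∫ ω, truncNegPart (Y ω) ∂P ≤ P.real {ω | Y ω < -α} + α := by
  set s := {ω | Y ω < -α}
  have hs : MeasurableSet s := measurableSet_lt hY measurable_const
  have hind : Integrable (s.indicator 1) P := (integrable_const (1 : ℝ)).indicator hs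
  have hbound : ∀ ω, truncNegPart (Y ω) ≤ s.indicator 1 ω + α := fun ω =>
    (truncNegPart_le_indicator_add hα (Y ω)).trans_eq (by rw [← Set.indicator_comp_right]; rfl)
  calc ∫ ω, truncNegPart (Y ω) ∂P
      ≤ ∫ ω, (s.indicator 1 ω + α) ∂P :=
        integral_mono_of_nonneg (ae_of_all _ fun ω => truncNegPart_nonneg _)
          (hind.add (integrable_const α)) (ae_of_all _ hbound)
    _ = P.real s + α := by
        rw [integral_add hind (integrable_const α), integral_indicator_one hs]
        simp

lemma integral_truncNegPart_pos [IsFiniteMeasure P] {Y : Ω → ℝ}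
    (hY : AEStronglyMeasurable Y P) (hneg : ¬ ∀ᵐ ω ∂P, 0 ≤ Y ω) :
    0 < ∫ ω, truncNegPart (Y ω) ∂P := by
  have hint : Integrable (fun ω => truncNegPart (Y ω)) P :=
    (integrable_const (1 : ℝ)).mono'
      (continuous_truncNegPart.comp_aestronglyMeasurable hY)
      (ae_of_all _ fun ω => abs_truncNegPart_le_one (Y ω))
  refine (integral_nonneg fun ω => truncNegPart_nonneg _).lt_of_ne' fun hzero => hneg ?_
  filter_upwards [(integral_eq_zero_iff_of_nonneg (fun ω => truncNegPart_nonneg _) hint).1 hzero]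
    with ω hω
  exact truncNegPart_eq_zero_iff.1 hω

lemma continuous_integral_truncNegPart [IsFiniteMeasure P] {X : Type*} [TopologicalSpace X]
    [FirstCountableTopology X] {F : X → Ω → ℝ} (hF : ∀ x, AEStronglyMeasurable (F x) P)
    (hcont : ∀ ω, Continuous fun x => F x ω) :
    Continuous fun x => ∫ ω, truncNegPart (F x ω) ∂P :=
  continuous_of_dominated (fun x => continuous_truncNegPart.comp_aestronglyMeasurable (hF x))
    (fun _ => ae_of_all _ fun _ => abs_truncNegPart_le_one _) (integrable_const 1)
    (ae_of_all _ fun ω => continuous_truncNegPart.comp (hcont ω))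

end Integral

theorem exists_quantitative_noArbitrage {Ω ι : Type*} [MeasurableSpace Ω] [Fintype ι]
    (P : Measure Ω) [IsProbabilityMeasure P] {Y : ι → Ω → ℝ} (hY : ∀ i, Measurable (Y i))
    (hAOA : ∀ x : EuclideanSpace ℝ ι, (∀ᵐ ω ∂P, 0 ≤ ∑ i, x i * Y i ω) → x = 0) :
    ∃ α ∈ Set.Ioo (0 : ℝ) 1, ∀ x : EuclideanSpace ℝ ι, ‖x‖ = 1 →
      ENNReal.ofReal α < P {ω | ∑ i, x i * Y i ω < -α} := by
  set X : EuclideanSpace ℝ ι → Ω → ℝ := fun x ω => ∑ i, x i * Y i ω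
  have hX : ∀ x, Measurable (X x) := fun x =>
    Finset.measurable_sum _ fun i _ => (hY i).const_mul (x i)
  have hφ : Continuous fun x => ∫ ω, truncNegPart (X x ω) ∂P :=
    continuous_integral_truncNegPart (fun x => (hX x).aestronglyMeasurable)
      fun ω => by fun_prop
  obtain ⟨m, hm, hmφ⟩ := (isCompact_sphere (0 : EuclideanSpace ℝ ι) 1).exists_forall_le'
    hφ.continuousOn fun x hx => integral_truncNegPart_pos (hX x).aestronglyMeasurable
      fun hnn => by simp [hAOA x hnn] at hx
  set α := min m 1 / 3 with hα_def
  have hα : 0 < α := by positivity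
  refine ⟨α, ⟨hα, by linarith [min_le_right m 1, hα_def]⟩, fun x hx => ?_⟩
  have hP : 2 * α ≤ P.real {ω | X x ω < -α} := by
    linarith [hmφ x (by simpa using hx), integral_truncNegPart_le (P := P) (hX x) hα.le,
      min_le_left m 1, hα_def]
  rw [← ofReal_measureReal]
  exact ENNReal.ofReal_lt_ofReal_iff'.2 ⟨by linarith, by linarith⟩

theorem apt_quantitative_AOA_finite_general
    {Ω : Type*} [MeasurableSpace Ω] (P : Measure Ω) [IsProbabilityMeasure P]
    (ε : ℕ → Ω → ℝ) (b : ℕ → ℝ)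
    (hmeas : ∀ i, Measurable (ε i))
    (N : ℕ)
    (hAOA : ∀ h : ℕ → ℝ,
      (∀ᵐ ω ∂P, 0 ≤ ∑ i ∈ Finset.range N, h i * (ε i ω - b i)) →
      ∀ i < N, h i = 0) :
    ∃ α : ℝ, α ∈ Set.Ioo (0 : ℝ) 1 ∧
      ∀ h : ℕ → ℝ, ∑ i ∈ Finset.range N, (h i) ^ 2 = 1 →
        ENNReal.ofReal α
          < P {ω | ∑ i ∈ Finset.range N, h i * (ε i ω - b i) < -α} := by
  have hAOA' : ∀ x : EuclideanSpace ℝ (Fin N),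
      (∀ᵐ ω ∂P, 0 ≤ ∑ i, x i * (ε i ω - b i)) → x = 0 := by
    intro x hx
    set h : ℕ → ℝ := fun i => if hi : i < N then x ⟨i, hi⟩ else 0
    have hzero := hAOA h <| by
      filter_upwards [hx] with ω hω
      rw [← Fin.sum_univ_eq_sum_range]
      simpa [h] using hω
    ext i
    simpa [h] using hzero i i.isLt
  obtain ⟨α, hα, hP⟩ := exists_quantitative_noArbitrage P
    (Y := fun (i : Fin N) ω => ε i ω - b i) (fun i => (hmeas i).sub measurable_const) hAOA'
  refine ⟨α, hα, fun h hh => ?_⟩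
  have hnorm : ‖WithLp.toLp 2 fun i : Fin N => h i‖ = 1 := by
    rw [EuclideanSpace.norm_eq, Real.sqrt_eq_one]
    simpa [← Fin.sum_univ_eq_sum_range] using hh
  simp only [← Fin.sum_univ_eq_sum_range fun i => h i * (ε i _ - b i)]
  exact hP _ hnorm

/-- If AOA(N) holds (a.s. nonnegative portfolio values force zero
weights), then there is a quantitative no-arbitrage constant `α_N ∈ (0,1)`:
for every unit-norm `(h 1, …, h N)` one has
`P(Σ h i (ε i − b i) < −α_N) > α_N`. -/
theorem apt_quantitative_AOA_finite
    {Ω : Type*} [MeasurableSpace Ω] (P : Measure Ω) [IsProbabilityMeasure P]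
    (ε : ℕ → Ω → ℝ) (b : ℕ → ℝ)
    (hmeas : ∀ i, Measurable (ε i))
    (N : ℕ) (hN : 1 ≤ N)
    (hAOA : ∀ h : ℕ → ℝ,
      (∀ᵐ ω ∂P, 0 ≤ ∑ i ∈ Finset.range N, h i * (ε i ω - b i)) →
      ∀ i < N, h i = 0) :
    ∃ α : ℝ, α ∈ Set.Ioo (0 : ℝ) 1 ∧
      ∀ h : ℕ → ℝ, ∑ i ∈ Finset.range N, (h i) ^ 2 = 1 →
        ENNReal.ofReal α
          < P {ω | ∑ i ∈ Finset.range N, h i * (ε i ω - b i) < -α} :=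
  apt_quantitative_AOA_finite_general P ε b hmeas N hAOA
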